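/- Conservation law for self-similarly shrinking curves: let I ⊆ ℝ be an interval and R, ψ : ℝ → ℝ be differentiable on I with R(s) > 0 and 0 < ψ(s) < π for all s ∈ I, satisfying the Abresch–Langer ODE system R′(s) = cos(ψ(s)) and ψ′(s) = (R(s) − 1/R(s))·sin(ψ(s)) on I. Then the function s ↦ exp((R(s)² − 1)/2) / (R(s)·sin(ψ(s))) is constant on I; i.e., K(R(s)) = c·sin(ψ(s)) on I for some constant c ≥ 1, where K(R) = exp((R²−1)/2)/R. -/

import Mathlib

/-!
Along a solution, `log K(R)` and `log sin ψ` have the same derivative `(R - 1/R) cos ψ`: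
the first because `K'(R) = K(R) (R - 1/R)` and `R' = cos ψ`, the second because
`ψ' = (R - 1/R) sin ψ`. Hence `K(R)/sin ψ` is constant on the interval. The constant is at
least `1` since `sin ψ ≤ 1 ≤ K(R)`, the last inequality being `log R ≤ R - 1 ≤ (R² - 1)/2`.
-/

open Real

noncomputable def K (R : ℝ) : ℝ := Real.exp ((R ^ 2 - 1) / 2) / R

theorem Set.OrdConnected.eq_of_hasDerivAt_eq_zero {E : Type*} [NormedAddCommGroup E]
    [NormedSpace ℝ E] {s : Set ℝ} (hs : s.OrdConnected) {f : ℝ → E}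
    (hf : ∀ x ∈ s, HasDerivAt f 0 x) {x y : ℝ} (hx : x ∈ s) (hy : y ∈ s) : f x = f y := by
  have h := (convex_iff_ordConnected.2 hs).norm_image_sub_le_of_norm_hasDerivWithin_le
    (fun z hz => (hf z hz).hasDerivWithinAt) (fun _ _ => norm_zero.le) hx hy
  rw [zero_mul, norm_le_zero_iff, sub_eq_zero] at h
  exact h.symm

theorem hasDerivAt_K {R : ℝ} (hR : R ≠ 0) : HasDerivAt K (K R * (R - 1 / R)) R := by
  have hexp : HasDerivAt (fun r => Real.exp ((r ^ 2 - 1) / 2))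
      (Real.exp ((R ^ 2 - 1) / 2) * R) R := by
    convert (((hasDerivAt_pow 2 R).sub_const 1).div_const 2).exp using 1
    ring
  refine (hexp.fun_div (hasDerivAt_id' R) hR).congr_deriv ?_
  rw [K]
  field_simp

theorem one_le_K {R : ℝ} (hR : 0 < R) : 1 ≤ K R := by
  have hlog : Real.log R ≤ (R ^ 2 - 1) / 2 :=
    (Real.log_le_sub_one_of_pos hR).trans (by nlinarith [sq_nonneg (R - 1)])
  rw [K, one_le_div hR]
  calc R = Real.exp (Real.log R) := (Real.exp_log hR).symm
    _ ≤ Real.exp ((R ^ 2 - 1) / 2) := Real.exp_le_exp.2 hlog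

theorem hasDerivAt_K_div_sin_eq_zero {R ψ : ℝ → ℝ} {s : ℝ} (hR : R s ≠ 0)
    (hsin : Real.sin (ψ s) ≠ 0) (hR' : HasDerivAt R (Real.cos (ψ s)) s)
    (hψ' : HasDerivAt ψ ((R s - 1 / R s) * Real.sin (ψ s)) s) :
    HasDerivAt (fun t => K (R t) / Real.sin (ψ t)) 0 s := by
  refine (((hasDerivAt_K hR).comp s hR').fun_div hψ'.sin hsin).congr_deriv ?_
  rw [Function.comp_apply]
  field_simp
  ring

theorem stmt_2 (I : Set ℝ) (hI : I.OrdConnected) (R ψ : ℝ → ℝ)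
    (hRpos : ∀ s ∈ I, 0 < R s)
    (hψpos : ∀ s ∈ I, 0 < ψ s) (hψlt : ∀ s ∈ I, ψ s < π)
    (hR' : ∀ s ∈ I, HasDerivAt R (Real.cos (ψ s)) s)
    (hψ' : ∀ s ∈ I, HasDerivAt ψ ((R s - 1 / R s) * Real.sin (ψ s)) s) :
    ∃ c : ℝ, 1 ≤ c ∧ ∀ s ∈ I, K (R s) = c * Real.sin (ψ s) := by
  rcases I.eq_empty_or_nonempty with rfl | ⟨s₀, hs₀⟩
  · exact ⟨1, le_rfl, fun s hs => hs.elim⟩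
  have hsin : ∀ s ∈ I, 0 < Real.sin (ψ s) := fun s hs =>
    Real.sin_pos_of_pos_of_lt_pi (hψpos s hs) (hψlt s hs)
  have hconst : ∀ s ∈ I, K (R s) / Real.sin (ψ s) = K (R s₀) / Real.sin (ψ s₀) :=
    fun s hs => hI.eq_of_hasDerivAt_eq_zero (fun t ht => hasDerivAt_K_div_sin_eq_zero
      (hRpos t ht).ne' (hsin t ht).ne' (hR' t ht) (hψ' t ht)) hs hs₀
  refine ⟨K (R s₀) / Real.sin (ψ s₀), ?_, fun s hs => ?_⟩
  · rw [one_le_div (hsin s₀ hs₀)]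
    exact (Real.sin_le_one _).trans (one_le_K (hRpos s₀ hs₀))
  · rw [← hconst s hs, div_mul_cancel₀ _ (hsin s hs).ne']
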